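/- Let n = 2 and define Q(z,χ,τ) := (τ + 2i·z₂χ₂)/(1 − 2i·z₁χ₁τ) (holomorphic near the origin of ℂ² × ℂ² × ℂ) and Q′(z,χ,τ) := τ + 2i·(z₁χ₁ + z₂χ₂). Then Q and Q′ are real normal defining functions of dimension 2; Q is holomorphically nondegenerate at 0, and Q′ is finitely nondegenerate at 0. The quadruple f(z,w) := (z₁w, z₂), g(z,w) := w, f̃(χ,τ) := (χ₁τ, χ₂), g̃(χ,τ) := τ is an HSPM sending (ℳ,0) into (ℳ′,0) which is Segre transversal to ℳ′ at 0 (∂g/∂w(0,0) = 1 ≠ 0), but for which det(∂f/∂z(z,0)) ≡ 0 and det(∂f̃/∂χ(χ,0)) ≡ 0 identically near 0. -/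

import Mathlib

open Filter Topology Complex

namespace HSPMpaper

variable {n : ℕ}

/-- Partial derivative of `F` in the `i`-th coordinate direction. -/
noncomputable def pd (i : Fin n) (F : (Fin n → ℂ) → ℂ) : (Fin n → ℂ) → ℂ :=
  fun z => fderiv ℂ F z (Pi.single i 1)

/-- Iterated partial derivative `∂^α` for a multi-index `α`. -/
noncomputable def mpd (α : Fin n → ℕ) (F : (Fin n → ℂ) → ℂ) : (Fin n → ℂ) → ℂ :=
  ((List.ofFn fun i : Fin n => (pd i)^[α i]).foldr (· ∘ ·) id) F

/-- Componentwise complex conjugation on `ℂⁿ`. -/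
def conjV (z : Fin n → ℂ) : Fin n → ℂ := fun i => starRingEnd ℂ (z i)

/-- The conjugate defining function `Q̄(χ,z,τ) = conj (Q (conj χ) (conj z) (conj τ))`. -/
def QBar (Q : (Fin n → ℂ) → (Fin n → ℂ) → ℂ → ℂ) : (Fin n → ℂ) → (Fin n → ℂ) → ℂ → ℂ :=
  fun χ z τ => starRingEnd ℂ (Q (conjV χ) (conjV z) (starRingEnd ℂ τ))

/-- `Q` is a normal defining function (of dimension `n`): holomorphic near the origin of
`ℂⁿ × ℂⁿ × ℂ` and satisfying `Q(0,χ,τ) = τ` and `Q(z,0,τ) = τ` near `0`. -/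
def IsNormalDF (Q : (Fin n → ℂ) → (Fin n → ℂ) → ℂ → ℂ) : Prop :=
  (∀ᶠ p in 𝓝 (0 : (Fin n → ℂ) × (Fin n → ℂ) × ℂ),
      AnalyticAt ℂ (fun q : (Fin n → ℂ) × (Fin n → ℂ) × ℂ => Q q.1 q.2.1 q.2.2) p) ∧
  (∀ᶠ p in 𝓝 (0 : (Fin n → ℂ) × (Fin n → ℂ) × ℂ),
      Q 0 p.2.1 p.2.2 = p.2.2 ∧ Q p.1 0 p.2.2 = p.2.2)

/-- `Q` is a real normal defining function: normal and `Q(z,χ,Q̄(χ,z,w)) = w` near `0`. -/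
def IsRealNormalDF (Q : (Fin n → ℂ) → (Fin n → ℂ) → ℂ → ℂ) : Prop :=
  IsNormalDF Q ∧
  ∀ᶠ p in 𝓝 (0 : (Fin n → ℂ) × (Fin n → ℂ) × ℂ),
    Q p.1 p.2.1 (QBar Q p.2.1 p.1 p.2.2) = p.2.2

/-- `(f,g,f̃,g̃)` is a holomorphic Segre preserving map sending `(ℳ,0)` into `(ℳ',0)`. -/
def IsHSPM (Q Q' : (Fin n → ℂ) → (Fin n → ℂ) → ℂ → ℂ)
    (f : (Fin n → ℂ) → ℂ → Fin n → ℂ) (g : (Fin n → ℂ) → ℂ → ℂ)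
    (ft : (Fin n → ℂ) → ℂ → Fin n → ℂ) (gt : (Fin n → ℂ) → ℂ → ℂ) : Prop :=
  (∀ᶠ p in 𝓝 (0 : (Fin n → ℂ) × ℂ), AnalyticAt ℂ (fun q : (Fin n → ℂ) × ℂ => f q.1 q.2) p) ∧
  (∀ᶠ p in 𝓝 (0 : (Fin n → ℂ) × ℂ), AnalyticAt ℂ (fun q : (Fin n → ℂ) × ℂ => g q.1 q.2) p) ∧
  (∀ᶠ p in 𝓝 (0 : (Fin n → ℂ) × ℂ), AnalyticAt ℂ (fun q : (Fin n → ℂ) × ℂ => ft q.1 q.2) p) ∧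
  (∀ᶠ p in 𝓝 (0 : (Fin n → ℂ) × ℂ), AnalyticAt ℂ (fun q : (Fin n → ℂ) × ℂ => gt q.1 q.2) p) ∧
  f 0 0 = 0 ∧ g 0 0 = 0 ∧ ft 0 0 = 0 ∧ gt 0 0 = 0 ∧
  ∀ᶠ p in 𝓝 (0 : (Fin n → ℂ) × (Fin n → ℂ) × ℂ),
    g p.1 (Q p.1 p.2.1 p.2.2) =
      Q' (f p.1 (Q p.1 p.2.1 p.2.2)) (ft p.2.1 p.2.2) (gt p.2.1 p.2.2)

/-- `M` is of finite type at `0`: `(z,χ) ↦ Q(z,χ,0)` does not vanish identically near `0`. -/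
def FiniteType (Q : (Fin n → ℂ) → (Fin n → ℂ) → ℂ → ℂ) : Prop :=
  ¬ ∀ᶠ p in 𝓝 (0 : (Fin n → ℂ) × (Fin n → ℂ)), Q p.1 p.2 0 = 0

/-- Jacobian matrix of `z ↦ f(z,0)` at `z`. -/
noncomputable def jacz (f : (Fin n → ℂ) → ℂ → Fin n → ℂ) (z : Fin n → ℂ) :
    Matrix (Fin n) (Fin n) ℂ :=
  Matrix.of fun i j => pd j (fun z' => f z' 0 i) z

/-- `ℋ` is Segre transversal to `ℳ'` at `0`: `∂g/∂w(0,0) ≠ 0`. -/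
noncomputable def SegreTransversal (g : (Fin n → ℂ) → ℂ → ℂ) : Prop :=
  deriv (fun w => g 0 w) 0 ≠ 0

/-- `ℋ` is totally Segre nondegenerate at `0`. -/
def TotallySegreNondeg (f ft : (Fin n → ℂ) → ℂ → Fin n → ℂ) : Prop :=
  (¬ ∀ᶠ z in 𝓝 (0 : Fin n → ℂ), (jacz f z).det = 0) ∧
  (¬ ∀ᶠ χ in 𝓝 (0 : Fin n → ℂ), (jacz ft χ).det = 0)

/-- `ℋ` is transversally null: `g ≡ 0` and `g̃ ≡ 0` near `0`. -/
def TransversallyNull (g gt : (Fin n → ℂ) → ℂ → ℂ) : Prop :=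
  (∀ᶠ p in 𝓝 (0 : (Fin n → ℂ) × ℂ), g p.1 p.2 = 0) ∧
  (∀ᶠ p in 𝓝 (0 : (Fin n → ℂ) × ℂ), gt p.1 p.2 = 0)

/-- The `k`-th coordinate direction in `ℂⁿ × ℂ`. -/
noncomputable def dirCT (n : ℕ) (k : Fin (n + 1)) : (Fin n → ℂ) × ℂ :=
  if h : (k : ℕ) < n then (Pi.single ⟨k, h⟩ 1, 0) else (0, 1)

/-- `M` is holomorphically nondegenerate at `0`: for some `K`, the map
`(χ,τ) ↦ (∂_z^α Q(0,χ,τ))_{|α| ≤ K}` has generic rank `n+1`. -/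
def HolNondeg (Q : (Fin n → ℂ) → (Fin n → ℂ) → ℂ → ℂ) : Prop :=
  ∃ K : ℕ, ∃ A : Fin (n + 1) → Fin n → ℕ, (∀ j, (∑ i, A j i) ≤ K) ∧
    ¬ ∀ᶠ p in 𝓝 (0 : (Fin n → ℂ) × ℂ),
      (Matrix.of fun j k : Fin (n + 1) =>
        fderiv ℂ (fun q : (Fin n → ℂ) × ℂ => mpd (A j) (fun z => Q z q.1 q.2) 0) p
          (dirCT n k)).det = 0

/-- `M` is of class `𝒞` at `0`: for some `K`, the map
`χ ↦ (∂_z^α Q(0,χ,0))_{|α| ≤ K}` has generic rank `n`. -/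
def ClassC (Q : (Fin n → ℂ) → (Fin n → ℂ) → ℂ → ℂ) : Prop :=
  ∃ K : ℕ, ∃ A : Fin n → Fin n → ℕ, (∀ j, (∑ i, A j i) ≤ K) ∧
    ¬ ∀ᶠ χ in 𝓝 (0 : Fin n → ℂ),
      (Matrix.of fun j k : Fin n =>
        pd k (fun χ' => mpd (A j) (fun z => Q z χ' 0) 0) χ).det = 0

/-- `M` is finitely nondegenerate at `0`: for some `K`, the vectors
`∂_χ ∂_z^α Q(0,0,0)`, `|α| ≤ K`, span `ℂⁿ`. -/
def FinNondeg (Q : (Fin n → ℂ) → (Fin n → ℂ) → ℂ → ℂ) : Prop :=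
  ∃ K : ℕ, Submodule.span ℂ
    {v : Fin n → ℂ | ∃ α : Fin n → ℕ, (∑ i, α i) ≤ K ∧
      v = fun i => pd i (fun χ => mpd α (fun z => Q z χ 0) 0) 0} = ⊤

/-- Full Jacobian matrix of `(z,w) ↦ (f(z,w), g(z,w))` at `p ∈ ℂⁿ × ℂ`. -/
noncomputable def jacFull (f : (Fin n → ℂ) → ℂ → Fin n → ℂ) (g : (Fin n → ℂ) → ℂ → ℂ)
    (p : (Fin n → ℂ) × ℂ) : Matrix (Fin (n + 1)) (Fin (n + 1)) ℂ :=
  Matrix.of fun i k =>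
    fderiv ℂ (fun q : (Fin n → ℂ) × ℂ => (Fin.snoc (f q.1 q.2) (g q.1 q.2) : Fin (n + 1) → ℂ) i) p (dirCT n k)

/-- The degree-`d` homogeneous term of the Taylor series of `φ` at `0`. -/
noncomputable def homogTerm (d : ℕ) (φ : (Fin n → ℂ) → ℂ) : (Fin n → ℂ) → ℂ :=
  fun z => iteratedFDeriv ℂ d φ 0 (fun _ => z) / (d.factorial : ℂ)

/-- The order of vanishing of `φ` at `0`. -/
noncomputable def vanishOrder (φ : (Fin n → ℂ) → ℂ) : ℕ :=
  sInf {d | homogTerm d φ ≠ 0}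

/-!
`Q` is the Möbius transformation `τ ↦ (τ + a) / (1 - b τ)` with `a = 2i z₂χ₂`, `b = 2i z₁χ₁`, and
`Q̄(χ,z,·)` is its inverse `w ↦ (w - a) / (1 + b w)`: this is the reality of `Q`. On `ℳ` we have
`w (1 - 2i z₁χ₁τ) = τ + 2i z₂χ₂`, which is literally `w = Q′((z₁w, z₂), (χ₁τ, χ₂), τ)`, so the map is
Segre preserving. The derivatives `Q(0,χ,τ) = τ`, `∂_{z₁}Q(0,χ,τ) = 2iχ₁τ²`, `∂_{z₂}Q(0,χ,τ) = 2iχ₂`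
have Jacobian determinant `-4τ²` in `(χ,τ)`, which does not vanish identically: `Q` is
holomorphically nondegenerate. For `Q′`, `∂_χ ∂_{z_j} Q′ = 2i e_j`. Finally the first component of
`f(z,0) = (0, z₂)` vanishes, so `∂f/∂z(z,0)` has a zero row.
-/

attribute [local fun_prop] analyticAt_fst analyticAt_snd

@[fun_prop]
theorem analyticAt_apply {𝕜 ι E : Type*} [NontriviallyNormedField 𝕜] [Fintype ι]
    [NormedAddCommGroup E] [NormedSpace 𝕜 E] (i : ι) (x : ι → E) :
    AnalyticAt 𝕜 (fun f : ι → E => f i) x :=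
  (ContinuousLinearMap.proj (R := 𝕜) (φ := fun _ : ι => E) i).analyticAt x

theorem fderiv_apply_eq_of_hasDerivAt {𝕜 E F : Type*} [NontriviallyNormedField 𝕜]
    [NormedAddCommGroup E] [NormedSpace 𝕜 E] [NormedAddCommGroup F] [NormedSpace 𝕜 F]
    {G : E → F} {p v : E} {c : F} (hG : DifferentiableAt 𝕜 G p)
    (h : HasDerivAt (fun t : 𝕜 => G (p + t • v)) c 0) : fderiv 𝕜 G p v = c :=
  hG.lineDeriv_eq_fderiv.symm.trans (show HasLineDerivAt 𝕜 G c p v from h).lineDeriv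

theorem mpd_zero (F : (Fin n → ℂ) → ℂ) : mpd 0 F = F := by
  suffices ∀ m, (List.replicate m (@id ((Fin n → ℂ) → ℂ))).foldr (· ∘ ·) id = id by
    simp [mpd, this]
  intro m
  induction m <;> simp [List.replicate_succ, *]

theorem mpd_single_fin_two (i : Fin 2) (F : (Fin 2 → ℂ) → ℂ) :
    mpd (Pi.single i 1) F = pd i F := by
  fin_cases i <;> simp [mpd, List.ofFn_succ]

theorem det_jacz_eq_zero_of_apply_eq_zero {f : (Fin n → ℂ) → ℂ → Fin n → ℂ} {i : Fin n}
    (hf : ∀ z, f z 0 i = 0) (z : Fin n → ℂ) : (jacz f z).det = 0 :=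
  Matrix.det_eq_zero_of_row_eq_zero i fun j => by simp [jacz, pd, hf]

theorem pd_const_mul_apply (c : ℂ) (i k : Fin n) (x : Fin n → ℂ) :
    pd k (fun χ : Fin n → ℂ => c * χ i) x = c * Pi.single (M := fun _ => ℂ) i 1 k := by
  refine fderiv_apply_eq_of_hasDerivAt (by fun_prop) ?_
  simpa [Pi.single_apply, eq_comm, mul_add, mul_comm] using
    ((hasDerivAt_id' (0 : ℂ)).mul_const (c * Pi.single (M := fun _ => ℂ) i 1 k)).const_add (c * x i)

theorem not_eventually_snd_eq_zero {𝕜 E : Type*} [NontriviallyNormedField 𝕜]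
    [TopologicalSpace E] (x : E) : ¬ ∀ᶠ p in 𝓝 (x, (0 : 𝕜)), p.2 = 0 := by
  intro h
  have hline : ∀ᶠ t in 𝓝 (0 : 𝕜), t = 0 :=
    (continuous_const.prodMk continuous_id).continuousAt.eventually h
  obtain ⟨t, ht, ht0⟩ := ((hline.filter_mono nhdsWithin_le_nhds).and
    (self_mem_nhdsWithin : ∀ᶠ t in 𝓝[≠] (0 : 𝕜), t ≠ 0)).exists
  exact ht0 ht

theorem moebius_apply_inverse {K : Type*} [Field K] {a b w : K} (hw : 1 + b * w ≠ 0)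
    (hab : 1 + b * a ≠ 0) :
    ((w - a) / (1 + b * w) + a) / (1 - b * ((w - a) / (1 + b * w))) = w := by
  have hden : 1 - b * ((w - a) / (1 + b * w)) = (1 + b * a) / (1 + b * w) := by
    field_simp
    ring
  rw [hden, div_add' _ _ _ hw, div_div_div_cancel_right₀ hw, div_eq_iff hab]
  ring

noncomputable def exampleQ : (Fin 2 → ℂ) → (Fin 2 → ℂ) → ℂ → ℂ :=
  fun z χ τ => (τ + 2 * I * (z 1 * χ 1)) / (1 - 2 * I * (z 0 * χ 0) * τ)

def exampleQ' : (Fin 2 → ℂ) → (Fin 2 → ℂ) → ℂ → ℂ :=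
  fun z χ τ => τ + 2 * I * (z 0 * χ 0 + z 1 * χ 1)

def exampleF : (Fin 2 → ℂ) → ℂ → Fin 2 → ℂ := fun z w => ![z 0 * w, z 1]

theorem eventually_denom_exampleQ_ne_zero :
    ∀ᶠ p in 𝓝 (0 : (Fin 2 → ℂ) × (Fin 2 → ℂ) × ℂ), 1 - 2 * I * (p.1 0 * p.2.1 0) * p.2.2 ≠ 0 :=
  ContinuousAt.eventually_ne (by fun_prop) (by simp)

theorem QBar_exampleQ (χ z : Fin 2 → ℂ) (w : ℂ) :
    QBar exampleQ χ z w = (w - 2 * I * (z 1 * χ 1)) / (1 + 2 * I * (z 0 * χ 0) * w) := by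
  simp only [QBar, exampleQ, conjV, map_div₀, map_add, map_sub, map_mul, map_one, map_ofNat,
    conj_conj, conj_I]
  ring_nf

theorem QBar_exampleQ' (χ z : Fin 2 → ℂ) (w : ℂ) :
    QBar exampleQ' χ z w = w - 2 * I * (z 0 * χ 0 + z 1 * χ 1) := by
  simp only [QBar, exampleQ', conjV, map_add, map_mul, map_ofNat, conj_conj, conj_I]
  ring

theorem isRealNormalDF_exampleQ : IsRealNormalDF exampleQ := by
  have hw : ∀ᶠ p in 𝓝 (0 : (Fin 2 → ℂ) × (Fin 2 → ℂ) × ℂ),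
      1 + 2 * I * (p.1 0 * p.2.1 0) * p.2.2 ≠ 0 :=
    ContinuousAt.eventually_ne (by fun_prop) (by simp)
  have hab : ∀ᶠ p in 𝓝 (0 : (Fin 2 → ℂ) × (Fin 2 → ℂ) × ℂ),
      1 + 2 * I * (p.1 0 * p.2.1 0) * (2 * I * (p.1 1 * p.2.1 1)) ≠ 0 :=
    ContinuousAt.eventually_ne (by fun_prop) (by simp)
  refine ⟨⟨?_, Eventually.of_forall fun p => by simp [exampleQ]⟩, ?_⟩
  · filter_upwards [eventually_denom_exampleQ_ne_zero] with p hp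
    unfold exampleQ
    fun_prop (disch := exact hp)
  · filter_upwards [hw, hab] with p hpw hpab
    rw [QBar_exampleQ, exampleQ]
    exact moebius_apply_inverse hpw hpab

theorem isRealNormalDF_exampleQ' : IsRealNormalDF exampleQ' := by
  refine ⟨⟨Eventually.of_forall fun p => ?_, Eventually.of_forall fun p => ?_⟩,
    Eventually.of_forall fun p => ?_⟩
  · unfold exampleQ'
    fun_prop
  · simp [exampleQ']
  · rw [QBar_exampleQ', exampleQ']
    ring

theorem analyticAt_exampleF (p : (Fin 2 → ℂ) × ℂ) :
    AnalyticAt ℂ (fun q : (Fin 2 → ℂ) × ℂ => exampleF q.1 q.2) p := by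
  rw [analyticAt_pi_iff]
  intro i
  fin_cases i <;> simp [exampleF] <;> fun_prop

theorem isHSPM_example :
    IsHSPM exampleQ exampleQ' exampleF (fun _ w => w) exampleF (fun _ τ => τ) := by
  refine ⟨.of_forall analyticAt_exampleF, .of_forall fun _ => by fun_prop,
    .of_forall analyticAt_exampleF, .of_forall fun _ => by fun_prop,
    by simp [exampleF], rfl, by simp [exampleF], rfl, ?_⟩
  filter_upwards [eventually_denom_exampleQ_ne_zero] with p hp
  have hQ := div_mul_cancel₀ (p.2.2 + 2 * I * (p.1 1 * p.2.1 1)) hp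
  simp only [exampleQ, exampleQ', exampleF, Matrix.cons_val_zero, Matrix.cons_val_one]
  linear_combination hQ

theorem det_jacz_exampleF (z : Fin 2 → ℂ) : (jacz exampleF z).det = 0 :=
  det_jacz_eq_zero_of_apply_eq_zero (i := 0) (fun z => by simp [exampleF]) z

theorem pd_zero_exampleQ (χ : Fin 2 → ℂ) (τ : ℂ) :
    pd 0 (fun z => exampleQ z χ τ) 0 = 2 * I * χ 0 * τ ^ 2 := by
  refine fderiv_apply_eq_of_hasDerivAt (by unfold exampleQ; fun_prop (disch := simp)) ?_
  have hline : (fun t : ℂ => exampleQ (0 + t • Pi.single 0 1) χ τ) =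
      fun t => τ / (1 - t * (2 * I * χ 0 * τ)) := by
    funext t; simp [exampleQ]; ring_nf
  rw [hline]
  exact ((hasDerivAt_const (0 : ℂ) τ).fun_div
    (((hasDerivAt_id' (0 : ℂ)).mul_const _).const_sub 1) (by simp)).congr_deriv (by simp; ring)

theorem pd_one_exampleQ (χ : Fin 2 → ℂ) (τ : ℂ) :
    pd 1 (fun z => exampleQ z χ τ) 0 = 2 * I * χ 1 := by
  refine fderiv_apply_eq_of_hasDerivAt (by unfold exampleQ; fun_prop (disch := simp)) ?_
  have hline : (fun t : ℂ => exampleQ (0 + t • Pi.single 1 1) χ τ) =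
      fun t => τ + t * (2 * I * χ 1) := by
    funext t; simp [exampleQ]; ring_nf
  rw [hline]
  simpa using ((hasDerivAt_id' (0 : ℂ)).mul_const (2 * I * χ 1)).const_add τ

theorem pd_exampleQ' (i : Fin 2) (χ : Fin 2 → ℂ) (τ : ℂ) :
    pd i (fun z => exampleQ' z χ τ) 0 = 2 * I * χ i := by
  refine fderiv_apply_eq_of_hasDerivAt (by unfold exampleQ'; fun_prop) ?_
  have hline : (fun t : ℂ => exampleQ' (0 + t • Pi.single i 1) χ τ) =
      fun t => τ + t * (2 * I * χ i) := by
    funext t; fin_cases i <;> simp [exampleQ'] <;> ring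
  rw [hline]
  simpa using ((hasDerivAt_id' (0 : ℂ)).mul_const (2 * I * χ i)).const_add τ

theorem exampleQ_zero_left (χ : Fin 2 → ℂ) (τ : ℂ) : exampleQ 0 χ τ = τ := by
  simp [exampleQ]

theorem det_holNondegMatrix_exampleQ (p : (Fin 2 → ℂ) × ℂ) :
    (Matrix.of fun j k : Fin (2 + 1) =>
      fderiv ℂ (fun q : (Fin 2 → ℂ) × ℂ =>
        mpd (![0, Pi.single 0 1, Pi.single 1 1] j) (fun z => exampleQ z q.1 q.2) 0) p
        (dirCT 2 k)).det = -4 * p.2 ^ 2 := by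
  have row0 : fderiv ℂ (fun q : (Fin 2 → ℂ) × ℂ => q.2) p = ContinuousLinearMap.snd ℂ _ ℂ :=
    fderiv_snd
  have row1 : HasFDerivAt (fun q : (Fin 2 → ℂ) × ℂ => 2 * I * q.1 0 * q.2 ^ 2) _ p :=
    (((hasFDerivAt_apply 0 p.1).comp p (hasFDerivAt_fst (𝕜 := ℂ))).const_mul (2 * I)).mul
      ((hasFDerivAt_snd (p := p)).pow 2)
  have row2 : HasFDerivAt (fun q : (Fin 2 → ℂ) × ℂ => 2 * I * q.1 1) _ p :=
    ((hasFDerivAt_apply 1 p.1).comp p (hasFDerivAt_fst (𝕜 := ℂ))).const_mul (2 * I)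
  rw [Matrix.det_fin_three]
  simp only [Matrix.of_apply, Matrix.cons_val_zero, Matrix.cons_val_one, Matrix.cons_val_two,
    Matrix.head_cons, Matrix.tail_cons, mpd_zero, mpd_single_fin_two, pd_zero_exampleQ,
    pd_one_exampleQ, exampleQ_zero_left, row0, row1.fderiv, row2.fderiv]
  simp [dirCT]
  linear_combination (4 * p.2 ^ 2) * I_mul_I

theorem holNondeg_exampleQ : HolNondeg exampleQ := by
  refine ⟨1, ![0, Pi.single 0 1, Pi.single 1 1], fun j => by fin_cases j <;> simp, ?_⟩
  simp only [det_holNondegMatrix_exampleQ, neg_mul, neg_eq_zero, mul_eq_zero,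
    OfNat.ofNat_ne_zero, false_or, pow_eq_zero_iff two_ne_zero]
  exact not_eventually_snd_eq_zero 0

theorem finNondeg_exampleQ' : FinNondeg exampleQ' := by
  refine ⟨1, eq_top_iff.2 ?_⟩
  rw [← (Pi.basisFun ℂ (Fin 2)).span_eq, Submodule.span_le]
  rintro _ ⟨i, rfl⟩
  have hvec : (fun k => pd k (fun χ => mpd (Pi.single i 1) (fun z => exampleQ' z χ 0) 0) 0) =
      (2 * I) • Pi.basisFun ℂ (Fin 2) i := by
    funext k
    simp [mpd_single_fin_two, pd_exampleQ', pd_const_mul_apply]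
  refine (Submodule.smul_mem_iff _ (by simp : (2 * I : ℂ) ≠ 0)).1 ?_
  rw [← hvec]
  exact Submodule.subset_span ⟨Pi.single i 1, by fin_cases i <;> simp, rfl⟩

/-- Example 3.6: an explicit HSPM between the complexifications of
`Im w = |z₁w|² + |z₂|²` (holomorphically nondegenerate) and `Im w' = |z₁'|² + |z₂'|²`
(finitely nondegenerate) which is Segre transversal at `0` but neither totally nor partially
Segre nondegenerate at `0`. -/
theorem statement15 :
    let Q : (Fin 2 → ℂ) → (Fin 2 → ℂ) → ℂ → ℂ :=
      fun z χ τ => (τ + 2 * Complex.I * (z 1 * χ 1)) / (1 - 2 * Complex.I * (z 0 * χ 0) * τ)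
    let Q' : (Fin 2 → ℂ) → (Fin 2 → ℂ) → ℂ → ℂ :=
      fun z χ τ => τ + 2 * Complex.I * (z 0 * χ 0 + z 1 * χ 1)
    let f : (Fin 2 → ℂ) → ℂ → Fin 2 → ℂ := fun z w => ![z 0 * w, z 1]
    let g : (Fin 2 → ℂ) → ℂ → ℂ := fun _ w => w
    let ft : (Fin 2 → ℂ) → ℂ → Fin 2 → ℂ := fun χ τ => ![χ 0 * τ, χ 1]
    let gt : (Fin 2 → ℂ) → ℂ → ℂ := fun _ τ => τ
    IsRealNormalDF Q ∧ IsRealNormalDF Q' ∧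
    HolNondeg Q ∧ FinNondeg Q' ∧
    IsHSPM Q Q' f g ft gt ∧
    deriv (fun w => g 0 w) 0 = 1 ∧
    SegreTransversal g ∧
    (∀ z : Fin 2 → ℂ, (jacz f z).det = 0) ∧
    (∀ χ : Fin 2 → ℂ, (jacz ft χ).det = 0) := by
  have hg : deriv (fun w : ℂ => w) 0 = 1 := deriv_id 0
  exact ⟨isRealNormalDF_exampleQ, isRealNormalDF_exampleQ', holNondeg_exampleQ,
    finNondeg_exampleQ', isHSPM_example, hg, ne_of_eq_of_ne hg one_ne_zero, det_jacz_exampleF,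
    det_jacz_exampleF⟩

end HSPMpaper
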